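/- Let (x*,y*) be a stationary point with dual solution (ρ*,w*,z*), ρ* ∈ (0,1), and suppose f(x*,y*) = f(ũ,ṽ) = b, S_C(x*) ∩ S_C(w*) ≠ ∅, and S_R(y*) ∩ S_R(z*) ≠ ∅. Then f(αw*+(1−α)x*, βz*+(1−β)y*) ≥ b for all α, β ∈ [0,1]. -/
import Mathlib


open scoped BigOperators Classical
open Matrix Filter

noncomputable section

namespace TS

/-- The probability simplex in `ℝ^k`. -/
def Δ (k : ℕ) : Set (Fin k → ℝ) := {x | (∀ i, 0 ≤ x i) ∧ ∑ i, x i = 1}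

/-- Maximum entry of a vector. -/
def vmax {k : ℕ} (u : Fin k → ℝ) : ℝ := ⨆ i, u i

/-- Maximum entry of a vector over an index set. -/
def vmaxOn {k : ℕ} (S : Set (Fin k)) (u : Fin k → ℝ) : ℝ := ⨆ i ∈ S, u i

/-- The support of a vector: indices with positive entries. -/
def supp {k : ℕ} (u : Fin k → ℝ) : Set (Fin k) := {i | 0 < u i}

/-- The set of indices where `u` attains its maximum entry. -/
def suppmax {k : ℕ} (u : Fin k → ℝ) : Set (Fin k) := {i | ∀ j, u j ≤ u i}

/-- The set of indices where `u` attains its minimum entry. -/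
def suppmin {k : ℕ} (u : Fin k → ℝ) : Set (Fin k) := {i | ∀ j, u i ≤ u j}

variable {m n : ℕ}

/-- `f_R(x,y) = max(Ry) − xᵀRy`. -/
def fR (R : Matrix (Fin m) (Fin n) ℝ) (x : Fin m → ℝ) (y : Fin n → ℝ) : ℝ :=
  vmax (R.mulVec y) - x ⬝ᵥ R.mulVec y

/-- `f_C(x,y) = max(Cᵀx) − xᵀCy`. -/
def fC (C : Matrix (Fin m) (Fin n) ℝ) (x : Fin m → ℝ) (y : Fin n → ℝ) : ℝ :=
  vmax (Matrix.vecMul x C) - x ⬝ᵥ C.mulVec y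

/-- `f(x,y) = max{f_R(x,y), f_C(x,y)}`. -/
def fNE (R C : Matrix (Fin m) (Fin n) ℝ) (x : Fin m → ℝ) (y : Fin n → ℝ) : ℝ :=
  max (fR R x y) (fC C x y)

/-- `S_R(y) = suppmax(Ry)`. -/
def SR (R : Matrix (Fin m) (Fin n) ℝ) (y : Fin n → ℝ) : Set (Fin m) := suppmax (R.mulVec y)

/-- `S_C(x) = suppmax(Cᵀx)`. -/
def SC (C : Matrix (Fin m) (Fin n) ℝ) (x : Fin m → ℝ) : Set (Fin n) := suppmax (Matrix.vecMul x C)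

/-- `g` has right (one-sided) derivative `d` at `0`: `lim_{θ→0⁺} (g θ − g 0)/θ = d`. -/
def HasPosDeriv (g : ℝ → ℝ) (d : ℝ) : Prop :=
  Tendsto (fun θ : ℝ => (g θ - g 0) / θ) (nhdsWithin 0 (Set.Ioi 0)) (nhds d)

/-- `(x,y)` is a stationary point: for every `(x',y')` in the product simplex, the scaled
directional derivative `Df(x,y,x',y')` of `f` exists and is nonnegative. -/
def IsStationary (R C : Matrix (Fin m) (Fin n) ℝ) (x : Fin m → ℝ) (y : Fin n → ℝ) : Prop :=
  ∀ x' ∈ Δ m, ∀ y' ∈ Δ n, ∃ d : ℝ,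
    HasPosDeriv (fun θ : ℝ => fNE R C (x + θ • (x' - x)) (y + θ • (y' - y))) d ∧ 0 ≤ d

/-- The function `T(x,y,x',y',ρ,w,z)`. -/
def Tfun (R C : Matrix (Fin m) (Fin n) ℝ) (x : Fin m → ℝ) (y : Fin n → ℝ)
    (x' : Fin m → ℝ) (y' : Fin n → ℝ) (ρ : ℝ) (w : Fin m → ℝ) (z : Fin n → ℝ) : ℝ :=
  ρ * (w ⬝ᵥ R.mulVec y' - x ⬝ᵥ R.mulVec y' - x' ⬝ᵥ R.mulVec y + x ⬝ᵥ R.mulVec y)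
    + (1 - ρ) * (x' ⬝ᵥ C.mulVec z - x ⬝ᵥ C.mulVec y' - x' ⬝ᵥ C.mulVec y + x ⬝ᵥ C.mulVec y)

/-- Feasibility for the tuple `(ρ,w,z)`: `ρ ∈ [0,1]`, `w ∈ Δ_m` with `supp w ⊆ S_R(y)`,
`z ∈ Δ_n` with `supp z ⊆ S_C(x)`. -/
def dualFeasible (R C : Matrix (Fin m) (Fin n) ℝ) (x : Fin m → ℝ) (y : Fin n → ℝ)
    (ρ : ℝ) (w : Fin m → ℝ) (z : Fin n → ℝ) : Prop :=
  ρ ∈ Set.Icc (0:ℝ) 1 ∧ w ∈ Δ m ∧ supp w ⊆ SR R y ∧ z ∈ Δ n ∧ supp z ⊆ SC C x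

/-- `max_{ρ,w,z} T(x,y,x',y',ρ,w,z)` over feasible `(ρ,w,z)`. -/
def innerMax (R C : Matrix (Fin m) (Fin n) ℝ) (x : Fin m → ℝ) (y : Fin n → ℝ)
    (x' : Fin m → ℝ) (y' : Fin n → ℝ) : ℝ :=
  sSup {t : ℝ | ∃ ρ w z, dualFeasible R C x y ρ w z ∧ t = Tfun R C x y x' y' ρ w z}

/-- `V(x,y) = min_{(x',y') ∈ Δ_m×Δ_n} max_{ρ,w,z} T(x,y,x',y',ρ,w,z)`. -/
def Vval (R C : Matrix (Fin m) (Fin n) ℝ) (x : Fin m → ℝ) (y : Fin n → ℝ) : ℝ :=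
  sInf {t : ℝ | ∃ x' ∈ Δ m, ∃ y' ∈ Δ n, t = innerMax R C x y x' y'}

/-- `min_{(x',y') ∈ Δ_m×Δ_n} T(x,y,x',y',ρ,w,z)`. -/
def innerMin (R C : Matrix (Fin m) (Fin n) ℝ) (x : Fin m → ℝ) (y : Fin n → ℝ)
    (ρ : ℝ) (w : Fin m → ℝ) (z : Fin n → ℝ) : ℝ :=
  sInf {t : ℝ | ∃ x' ∈ Δ m, ∃ y' ∈ Δ n, t = Tfun R C x y x' y' ρ w z}

/-- `(ρ,w,z)` is a dual solution at `(x,y)`. -/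
def IsDualSolution (R C : Matrix (Fin m) (Fin n) ℝ) (x : Fin m → ℝ) (y : Fin n → ℝ)
    (ρ : ℝ) (w : Fin m → ℝ) (z : Fin n → ℝ) : Prop :=
  dualFeasible R C x y ρ w z ∧ Vval R C x y = innerMin R C x y ρ w z

/-- `(x,y)` is an `ε`-approximate Nash equilibrium. -/
def IsEpsNash (R C : Matrix (Fin m) (Fin n) ℝ) (x : Fin m → ℝ) (y : Fin n → ℝ) (ε : ℝ) : Prop :=
  (∀ x' ∈ Δ m, x' ⬝ᵥ R.mulVec y ≤ x ⬝ᵥ R.mulVec y + ε) ∧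
  (∀ y' ∈ Δ n, x ⬝ᵥ C.mulVec y' ≤ x ⬝ᵥ C.mulVec y + ε)

/-- A Nash equilibrium is a `0`-approximate Nash equilibrium. -/
def IsNash (R C : Matrix (Fin m) (Fin n) ℝ) (x : Fin m → ℝ) (y : Fin n → ℝ) : Prop :=
  IsEpsNash R C x y 0

/-- `λ* = (w*−x*)ᵀRz*`. -/
def lamStar (R : Matrix (Fin m) (Fin n) ℝ) (xs ws : Fin m → ℝ) (zs : Fin n → ℝ) : ℝ :=
  (ws - xs) ⬝ᵥ R.mulVec zs

/-- `μ* = w*ᵀC(z*−y*)`. -/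
def muStar (C : Matrix (Fin m) (Fin n) ℝ) (ws : Fin m → ℝ) (ys zs : Fin n → ℝ) : ℝ :=
  ws ⬝ᵥ C.mulVec (zs - ys)

/-- `p* = f_R(x*,z*)/(f_R(x*,z*)+f_C(w*,z*)−f_R(w*,z*))` (`= 0` if the denominator is `0`,
by the real-division-by-zero convention). -/
def pstar (R C : Matrix (Fin m) (Fin n) ℝ) (xs ws : Fin m → ℝ) (zs : Fin n → ℝ) : ℝ :=
  fR R xs zs / (fR R xs zs + fC C ws zs - fR R ws zs)

/-- `q* = f_C(w*,y*)/(f_C(w*,y*)+f_R(w*,z*)−f_C(w*,z*))` (`= 0` if the denominator is `0`). -/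
def qstar (R C : Matrix (Fin m) (Fin n) ℝ) (ws : Fin m → ℝ) (ys zs : Fin n → ℝ) : ℝ :=
  fC C ws ys / (fC C ws ys + fR R ws zs - fC C ws zs)

/-- The adjusted pair `(ũ,ṽ)` of Method 3. -/
def tildeUV (R C : Matrix (Fin m) (Fin n) ℝ) (xs : Fin m → ℝ) (ys : Fin n → ℝ)
    (ws : Fin m → ℝ) (zs : Fin n → ℝ) : (Fin m → ℝ) × (Fin n → ℝ) :=
  if fR R ws zs ≤ fC C ws zs then
    (pstar R C xs ws zs • ws + (1 - pstar R C xs ws zs) • xs, zs)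
  else
    (ws, qstar R C ws ys zs • zs + (1 - qstar R C ws ys zs) • ys)

/-- `g(s,t) = min{st/(s+t), (1−s)/(1+t−s)}`; by real division-by-zero conventions,
`st/(s+t)` is `0` when `s = t = 0`. -/
def gTS (s t : ℝ) : ℝ := min (s * t / (s + t)) ((1 - s) / (1 + t - s))

/-- `b = max_{(s,t) ∈ [0,1]²} g(s,t)`. -/
def bTS : ℝ := sSup {r : ℝ | ∃ s ∈ Set.Icc (0:ℝ) 1, ∃ t ∈ Set.Icc (0:ℝ) 1, r = gTS s t}

/-! ### Auxiliary lemmas for Statement 15 -/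

lemma le_vmax {k : ℕ} (u : Fin k → ℝ) (i : Fin k) : u i ≤ vmax u :=
  le_ciSup (Set.finite_range u).bddAbove i

lemma vmax_eq {k : ℕ} (u : Fin k → ℝ) (i : Fin k) (hi : i ∈ suppmax u) : vmax u = u i := by
  have : Nonempty (Fin k) := ⟨i⟩
  exact le_antisymm (ciSup_le hi) (le_vmax u i)

lemma vmax_combo {k : ℕ} (u v : Fin k → ℝ) (i : Fin k) (hiu : i ∈ suppmax u)
    (hiv : i ∈ suppmax v) {a c : ℝ} (ha : 0 ≤ a) (hc : 0 ≤ c) :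
    vmax (a • u + c • v) = a * vmax u + c * vmax v := by
  have hcombo : i ∈ suppmax (a • u + c • v) := by
    intro j
    simp only [Pi.add_apply, Pi.smul_apply, smul_eq_mul]
    exact add_le_add (mul_le_mul_of_nonneg_left (hiu j) ha)
      (mul_le_mul_of_nonneg_left (hiv j) hc)
  rw [vmax_eq _ i hcombo, vmax_eq _ i hiu, vmax_eq _ i hiv]
  simp [smul_eq_mul]

lemma dot_le_vmax {k : ℕ} {x : Fin k → ℝ} (u : Fin k → ℝ) (hx : x ∈ Δ k) :
    x ⬝ᵥ u ≤ vmax u := by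
  have h : ∀ i ∈ Finset.univ, x i * u i ≤ x i * vmax u := by
    intro i _
    exact mul_le_mul_of_nonneg_left (le_vmax u i) (hx.1 i)
  calc x ⬝ᵥ u ≤ ∑ i, x i * vmax u := Finset.sum_le_sum h
  _ = (∑ i, x i) * vmax u := by rw [Finset.sum_mul]
  _ = vmax u := by rw [hx.2, one_mul]

lemma dot_eq_vmax {k : ℕ} {x : Fin k → ℝ} {u : Fin k → ℝ} (hx : x ∈ Δ k)
    (hs : supp x ⊆ suppmax u) : x ⬝ᵥ u = vmax u := by
  have h : ∀ i ∈ Finset.univ, x i * u i = x i * vmax u := by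
    intro i _
    rcases (hx.1 i).eq_or_lt with h0 | h0
    · rw [← h0]; ring
    · rw [vmax_eq u i (hs h0)]
  calc x ⬝ᵥ u = ∑ i, x i * vmax u := Finset.sum_congr rfl h
  _ = (∑ i, x i) * vmax u := by rw [Finset.sum_mul]
  _ = vmax u := by rw [hx.2, one_mul]

lemma combo_mem {k : ℕ} {x w : Fin k → ℝ} (hx : x ∈ Δ k) (hw : w ∈ Δ k) {a : ℝ}
    (h0 : 0 ≤ a) (h1 : a ≤ 1) : a • w + (1 - a) • x ∈ Δ k := by
  constructor
  · intro i
    simp only [Pi.add_apply, Pi.smul_apply, smul_eq_mul]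
    have := hx.1 i; have := hw.1 i
    have h1' : (0:ℝ) ≤ 1 - a := by linarith
    positivity
  · simp only [Pi.add_apply, Pi.smul_apply, smul_eq_mul]
    rw [Finset.sum_add_distrib, ← Finset.mul_sum, ← Finset.mul_sum, hx.2, hw.2]
    ring

lemma fR_nonneg {k l : ℕ} (R : Matrix (Fin k) (Fin l) ℝ) {x : Fin k → ℝ} (y : Fin l → ℝ)
    (hx : x ∈ Δ k) : 0 ≤ fR R x y :=
  sub_nonneg.2 (dot_le_vmax _ hx)

lemma fC_nonneg {k l : ℕ} (C : Matrix (Fin k) (Fin l) ℝ) (x : Fin k → ℝ) {y : Fin l → ℝ}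
    (hy : y ∈ Δ l) : 0 ≤ fC C x y := by
  unfold fC
  rw [Matrix.dotProduct_mulVec, dotProduct_comm]
  exact sub_nonneg.2 (dot_le_vmax _ hy)

lemma fR_combo {k l : ℕ} (R : Matrix (Fin k) (Fin l) ℝ) (x w : Fin k → ℝ) (y z : Fin l → ℝ)
    (hSR : (SR R y ∩ SR R z).Nonempty) {a c : ℝ} (hc0 : 0 ≤ c) (hc1 : c ≤ 1) :
    fR R (a • w + (1 - a) • x) (c • z + (1 - c) • y) =
      a * c * fR R w z + a * (1 - c) * fR R w y + (1 - a) * c * fR R x z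
        + (1 - a) * (1 - c) * fR R x y := by
  obtain ⟨i, hiy, hiz⟩ := hSR
  have h1 : R.mulVec (c • z + (1 - c) • y) = c • R.mulVec z + (1 - c) • R.mulVec y := by
    rw [Matrix.mulVec_add, Matrix.mulVec_smul, Matrix.mulVec_smul]
  unfold fR
  rw [h1, vmax_combo _ _ i hiz hiy hc0 (by linarith)]
  simp only [dotProduct_add, add_dotProduct, smul_dotProduct,
    dotProduct_smul, smul_eq_mul]
  ring

lemma fC_combo {k l : ℕ} (C : Matrix (Fin k) (Fin l) ℝ) (x w : Fin k → ℝ) (y z : Fin l → ℝ)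
    (hSC : (SC C x ∩ SC C w).Nonempty) {a c : ℝ} (ha0 : 0 ≤ a) (ha1 : a ≤ 1) :
    fC C (a • w + (1 - a) • x) (c • z + (1 - c) • y) =
      a * c * fC C w z + a * (1 - c) * fC C w y + (1 - a) * c * fC C x z
        + (1 - a) * (1 - c) * fC C x y := by
  obtain ⟨i, hix, hiw⟩ := hSC
  have h1 : Matrix.vecMul (a • w + (1 - a) • x) C
      = a • Matrix.vecMul w C + (1 - a) • Matrix.vecMul x C := by
    rw [Matrix.add_vecMul, Matrix.smul_vecMul, Matrix.smul_vecMul]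
  have h2 : C.mulVec (c • z + (1 - c) • y) = c • C.mulVec z + (1 - c) • C.mulVec y := by
    rw [Matrix.mulVec_add, Matrix.mulVec_smul, Matrix.mulVec_smul]
  unfold fC
  rw [h1, h2, vmax_combo _ _ i hiw hix ha0 (by linarith)]
  simp only [dotProduct_add, add_dotProduct, smul_dotProduct,
    dotProduct_smul, smul_eq_mul]
  ring

lemma bTS_ge : (1/4 : ℝ) ≤ bTS := by
  have hmem : (1/4 : ℝ) ∈ {r : ℝ | ∃ s ∈ Set.Icc (0:ℝ) 1, ∃ t ∈ Set.Icc (0:ℝ) 1, r = gTS s t} := by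
    refine ⟨1/2, by norm_num, 1/2, by norm_num, ?_⟩
    unfold gTS
    norm_num
  apply le_csSup _ hmem
  refine ⟨1, ?_⟩
  rintro r ⟨s, hs, t, ht, rfl⟩
  have h2 : (1 - s) / (1 + t - s) ≤ 1 := by
    rcases lt_or_eq_of_le (show (0:ℝ) ≤ 1 + t - s by
      have := hs.2; have := ht.1; linarith) with h | h
    · rw [div_le_one h]; have := ht.1; linarith
    · rw [← h, div_zero]; norm_num
  exact le_trans (min_le_right _ _) h2

lemma bTS_pos : (0:ℝ) < bTS := lt_of_lt_of_le (by norm_num) bTS_ge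

lemma tqm (a p1 p2 q1 q2 : ℝ) :
    Tendsto (fun θ : ℝ => (max (a + p1*θ + p2*θ^2) (a + q1*θ + q2*θ^2) - a) / θ)
      (nhdsWithin 0 (Set.Ioi 0)) (nhds (max p1 q1)) := by
  have hbase : Tendsto (fun θ : ℝ => max (p1 + p2*θ) (q1 + q2*θ))
      (nhdsWithin 0 (Set.Ioi 0)) (nhds (max p1 q1)) := by
    have hc : Continuous fun θ : ℝ => max (p1 + p2*θ) (q1 + q2*θ) := by continuity
    have h := hc.tendsto 0
    simp only [mul_zero, add_zero] at h
    exact h.mono_left nhdsWithin_le_nhds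
  refine Tendsto.congr' ?_ hbase
  filter_upwards [self_mem_nhdsWithin] with θ hθ
  have hθ0 : (0:ℝ) < θ := hθ
  have hne : θ ≠ 0 := hθ0.ne'
  have hmono : Monotone fun r : ℝ => (r - a)/θ := by
    intro r s hrs
    have h1 : r - a ≤ s - a := by linarith
    exact div_le_div_of_nonneg_right h1 hθ0.le
  have e1 : ((a + p1*θ + p2*θ^2) ⊔ (a + q1*θ + q2*θ^2) - a)/θ
      = ((a + p1*θ + p2*θ^2 - a)/θ) ⊔ ((a + q1*θ + q2*θ^2 - a)/θ) := hmono.map_max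
  rw [e1, show (a + p1*θ + p2*θ^2 - a)/θ = p1 + p2*θ from by field_simp; ring,
      show (a + q1*θ + q2*θ^2 - a)/θ = q1 + q2*θ from by field_simp; ring]

lemma tql (aP p1 p2 aQ q1 q2 : ℝ) (h : aQ < aP) :
    Tendsto (fun θ : ℝ => (max (aP + p1*θ + p2*θ^2) (aQ + q1*θ + q2*θ^2) - aP) / θ)
      (nhdsWithin 0 (Set.Ioi 0)) (nhds p1) := by
  have hcont : Continuous fun θ : ℝ =>
      (aP + p1*θ + p2*θ^2) - (aQ + q1*θ + q2*θ^2) := by continuity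
  have h0 : (0:ℝ) < (fun θ : ℝ => (aP + p1*θ + p2*θ^2) - (aQ + q1*θ + q2*θ^2)) 0 := by
    simp only [mul_zero, add_zero]; linarith
  have hev : ∀ᶠ θ in nhdsWithin (0:ℝ) (Set.Ioi 0),
      aQ + q1*θ + q2*θ^2 < aP + p1*θ + p2*θ^2 := by
    have h1 := (hcont.tendsto 0).eventually (eventually_gt_nhds h0)
    exact (h1.mono fun θ hθ => by linarith).filter_mono nhdsWithin_le_nhds
  have hbase : Tendsto (fun θ : ℝ => p1 + p2*θ) (nhdsWithin 0 (Set.Ioi 0)) (nhds p1) := by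
    have hc : Continuous fun θ : ℝ => p1 + p2*θ := by continuity
    have h := hc.tendsto 0
    simp only [mul_zero, add_zero] at h
    exact h.mono_left nhdsWithin_le_nhds
  refine Tendsto.congr' ?_ hbase
  filter_upwards [hev, self_mem_nhdsWithin] with θ hlt hθ
  have hθ0 : (0:ℝ) < θ := hθ
  rw [max_eq_left hlt.le, show aP + p1*θ + p2*θ^2 - aP = (p1 + p2*θ)*θ from by ring,
    mul_div_cancel_right₀ _ hθ0.ne']

lemma stat_extract {F : ℝ → ℝ} {d : ℝ} (hd : HasPosDeriv F d) (hd0 : 0 ≤ d)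
    (AP BP CP AQ BQ CQ : ℝ)
    (heq : ∀ θ ∈ Set.Ioo (0:ℝ) 1, F θ = max (AP + BP*θ + CP*θ^2) (AQ + BQ*θ + CQ*θ^2))
    (h0 : F 0 = max AP AQ) :
    (AP = AQ → 0 ≤ max BP BQ) ∧ (AQ < AP → 0 ≤ BP) ∧ (AP < AQ → 0 ≤ BQ) := by
  have hmem : Set.Ioo (0:ℝ) 1 ∈ nhdsWithin (0:ℝ) (Set.Ioi 0) := by
    rw [mem_nhdsWithin]
    exact ⟨Set.Iio 1, isOpen_Iio, by norm_num, by
      rintro θ ⟨h1, h2⟩; exact ⟨h2, h1⟩⟩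
  refine ⟨fun hAA => ?_, fun hQP => ?_, fun hPQ => ?_⟩
  · have hT : Tendsto (fun θ : ℝ => (F θ - F 0) / θ) (nhdsWithin 0 (Set.Ioi 0))
        (nhds (max BP BQ)) := by
      refine Tendsto.congr' ?_ (tqm AP BP CP BQ CQ)
      filter_upwards [hmem] with θ hθ
      rw [heq θ hθ, h0, ← hAA, max_self]
    have := tendsto_nhds_unique hd hT
    linarith [this ▸ hd0]
  · have hT : Tendsto (fun θ : ℝ => (F θ - F 0) / θ) (nhdsWithin 0 (Set.Ioi 0))
        (nhds BP) := by
      refine Tendsto.congr' ?_ (tql AP BP CP AQ BQ CQ hQP)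
      filter_upwards [hmem] with θ hθ
      rw [heq θ hθ, h0, max_eq_left hQP.le]
    have := tendsto_nhds_unique hd hT
    linarith [this ▸ hd0]
  · have hT : Tendsto (fun θ : ℝ => (F θ - F 0) / θ) (nhdsWithin 0 (Set.Ioi 0))
        (nhds BQ) := by
      refine Tendsto.congr' ?_ (tql AQ BQ CQ AP BP CP hPQ)
      filter_upwards [hmem] with θ hθ
      rw [heq θ hθ, h0, max_eq_right hPQ.le, max_comm]
    have := tendsto_nhds_unique hd hT
    linarith [this ▸ hd0]

lemma alg (b u v t c α β : ℝ) (hb : 0 < b) (hu : 0 ≤ u) (hv : 0 ≤ v) (ht : 0 ≤ t)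
    (huv : b*b ≤ u*v) (hrel : c*u = b*(u + b - t))
    (hα0 : 0 ≤ α) (hα1 : α ≤ 1) (hβ0 : 0 ≤ β) (hβ1 : β ≤ 1)
    (hi : (1-α)*β*u + α*β*t < α*b) (hii : (1-β)*α*v + α*β*c < β*b) : False := by
  have hαpos : 0 < α := by
    rcases hα0.eq_or_lt with h | h
    · exfalso; rw [← h] at hi; nlinarith [mul_nonneg hβ0 hu]
    · exact h
  have hβpos : 0 < β := by
    rcases hβ0.eq_or_lt with h | h
    · exfalso; rw [← h] at hii; nlinarith [mul_nonneg hα0 hv]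
    · exact h
  have hupos : 0 < u := by
    rcases hu.eq_or_lt with h | h
    · exfalso; rw [← h] at huv; nlinarith
    · exact h
  rcases hβ1.eq_or_lt with hβe | hβlt
  · -- β = 1
    subst hβe
    have hii' : α * c < b := by nlinarith [hii]
    have h1 : α * (c*u) < b * u := by
      have := mul_lt_mul_of_pos_right hii' hupos
      nlinarith [this]
    rw [hrel] at h1
    nlinarith [mul_lt_mul_of_pos_right hi hb, h1]
  · -- β < 1
    have h1 : ((1-α)*β*u + α*β*t)*b < α*b*b := mul_lt_mul_of_pos_right hi hb
    have h2 : ((1-β)*α*v + α*β*c)*u < β*b*u := mul_lt_mul_of_pos_right hii hupos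
    have e : α*β*(c*u) = α*β*(b*(u+b-t)) := by rw [hrel]
    have h3 : α*v*u*(1-β) < α*b*b*(1-β) := by nlinarith [h1, h2, e]
    have h4 : α*b*b*(1-β) ≤ α*u*v*(1-β) := by
      nlinarith [mul_nonneg (mul_nonneg hαpos.le (sub_nonneg.2 hβlt.le)) (sub_nonneg.2 huv)]
    nlinarith [h3, h4]

set_option maxHeartbeats 1000000 in
/-- if `f(x*,y*) = f(ũ,ṽ) = b`, `S_C(x*) ∩ S_C(w*) ≠ ∅` and
`S_R(y*) ∩ S_R(z*) ≠ ∅`, then `f ≥ b` on the whole square `Λ`. -/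
theorem stmt15 {m n : ℕ} (R C : Matrix (Fin (m+1)) (Fin (n+1)) ℝ)
    (hR : ∀ i j, R i j ∈ Set.Icc (0:ℝ) 1) (hC : ∀ i j, C i j ∈ Set.Icc (0:ℝ) 1)
    (xs : Fin (m+1) → ℝ) (ys : Fin (n+1) → ℝ) (ρs : ℝ) (ws : Fin (m+1) → ℝ) (zs : Fin (n+1) → ℝ)
    (hxs : xs ∈ Δ (m+1)) (hys : ys ∈ Δ (n+1))
    (hstat : IsStationary R C xs ys)
    (hdual : IsDualSolution R C xs ys ρs ws zs)
    (hρ : ρs ∈ Set.Ioo (0:ℝ) 1)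
    (hb1 : fNE R C xs ys = bTS)
    (hb2 : fNE R C (tildeUV R C xs ys ws zs).1 (tildeUV R C xs ys ws zs).2 = bTS)
    (hSC : (SC C xs ∩ SC C ws).Nonempty) (hSR : (SR R ys ∩ SR R zs).Nonempty) :
    ∀ α ∈ Set.Icc (0:ℝ) 1, ∀ β ∈ Set.Icc (0:ℝ) 1,
      bTS ≤ fNE R C (α • ws + (1 - α) • xs) (β • zs + (1 - β) • ys) := by
  obtain ⟨⟨hρmem, hwsΔ, hwsupp, hzsΔ, hzsupp⟩, -⟩ := hdual
  have hbpos : (0:ℝ) < bTS := bTS_pos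
  -- zero corner values
  have hwy0 : fR R ws ys = 0 := by
    unfold fR
    rw [dot_eq_vmax hwsΔ hwsupp]
    ring
  have hxz0 : fC C xs zs = 0 := by
    unfold fC
    rw [Matrix.dotProduct_mulVec, dotProduct_comm, dot_eq_vmax hzsΔ hzsupp]
    ring
  -- nonnegativity of corner values
  have hr01nn : 0 ≤ fR R xs zs := fR_nonneg R zs hxs
  have hr11nn : 0 ≤ fR R ws zs := fR_nonneg R zs hwsΔ
  have hc10nn : 0 ≤ fC C ws ys := fC_nonneg C ws hys
  have hc11nn : 0 ≤ fC C ws zs := fC_nonneg C ws hzsΔ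
  -- the key stationarity consequences
  have core : ∀ a ∈ Set.Icc (0:ℝ) 1, ∀ c ∈ Set.Icc (0:ℝ) 1,
      (fR R xs ys = fC C xs ys →
        0 ≤ max (c * fR R xs zs - (a+c) * fR R xs ys) (a * fC C ws ys - (a+c) * fC C xs ys)) ∧
      (fC C xs ys < fR R xs ys → 0 ≤ c * fR R xs zs - (a+c) * fR R xs ys) ∧
      (fR R xs ys < fC C xs ys → 0 ≤ a * fC C ws ys - (a+c) * fC C xs ys) := by
    intro a ha c hc
    obtain ⟨d, hdF, hd0⟩ := hstat (a • ws + (1-a) • xs) (combo_mem hxs hwsΔ ha.1 ha.2)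
        (c • zs + (1-c) • ys) (combo_mem hys hzsΔ hc.1 hc.2)
    refine stat_extract hdF hd0 (fR R xs ys) (c * fR R xs zs - (a+c) * fR R xs ys)
        (a*c*(fR R xs ys - fR R xs zs + fR R ws zs))
        (fC C xs ys) (a * fC C ws ys - (a+c) * fC C xs ys)
        (a*c*(fC C xs ys - fC C ws ys + fC C ws zs)) ?_ ?_
    · intro θ hθ
      have hx' : xs + θ • ((a • ws + (1-a) • xs) - xs) = (θ*a) • ws + (1 - θ*a) • xs := by
        funext i
        simp only [Pi.add_apply, Pi.smul_apply, Pi.sub_apply, smul_eq_mul]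
        ring
      have hy' : ys + θ • ((c • zs + (1-c) • ys) - ys) = (θ*c) • zs + (1 - θ*c) • ys := by
        funext i
        simp only [Pi.add_apply, Pi.smul_apply, Pi.sub_apply, smul_eq_mul]
        ring
      have hta0 : 0 ≤ θ*a := mul_nonneg hθ.1.le ha.1
      have hta1 : θ*a ≤ 1 := by
        have := mul_le_mul hθ.2.le ha.2 ha.1 zero_le_one
        linarith
      have htc0 : 0 ≤ θ*c := mul_nonneg hθ.1.le hc.1
      have htc1 : θ*c ≤ 1 := by
        have := mul_le_mul hθ.2.le hc.2 hc.1 zero_le_one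
        linarith
      show fNE R C (xs + θ • ((a • ws + (1-a) • xs) - xs))
          (ys + θ • ((c • zs + (1-c) • ys) - ys)) = _
      rw [hx', hy']
      unfold fNE
      rw [fR_combo R xs ws ys zs hSR htc0 htc1, fC_combo C xs ws ys zs hSC hta0 hta1,
        hwy0, hxz0]
      congr 1 <;> ring
    · simp only [zero_smul, add_zero]
      rfl
  have hmax : max (fR R xs ys) (fC C xs ys) = bTS := hb1
  have h01 : (0:ℝ) ∈ Set.Icc (0:ℝ) 1 := ⟨le_refl 0, zero_le_one⟩
  have h11 : (1:ℝ) ∈ Set.Icc (0:ℝ) 1 := ⟨zero_le_one, le_refl 1⟩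
  have heq00 : fR R xs ys = fC C xs ys := by
    rcases lt_trichotomy (fR R xs ys) (fC C xs ys) with h | h | h
    · exfalso
      have h2 := ((core 0 h01 1 h11).2.2) h
      have hc00b : fC C xs ys = bTS := by rw [← hmax, max_eq_right h.le]
      linarith [h2]
    · exact h
    · exfalso
      have h2 := ((core 1 h11 0 h01).2.1) h
      have hr00b : fR R xs ys = bTS := by rw [← hmax, max_eq_left h.le]
      linarith [h2]
  have hr00b : fR R xs ys = bTS := by rw [← hmax, heq00, max_self]
  have hc00b : fC C xs ys = bTS := by rw [← heq00]; exact hr00b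
  have hkey : ∀ a ∈ Set.Icc (0:ℝ) 1, ∀ c ∈ Set.Icc (0:ℝ) 1,
      0 ≤ max (c * fR R xs zs - (a+c) * bTS) (a * fC C ws ys - (a+c) * bTS) := by
    intro a ha c hc
    have h := ((core a ha c hc).1) heq00
    rw [hr00b, hc00b] at h
    exact h
  have hr01b : bTS ≤ fR R xs zs := by
    have h := hkey 0 h01 1 h11
    rcases le_max_iff.mp h with h' | h' <;> linarith
  have hc10b : bTS ≤ fC C ws ys := by
    have h := hkey 1 h11 0 h01
    rcases le_max_iff.mp h with h' | h' <;> linarith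
  have huv : bTS * bTS ≤ (fR R xs zs - bTS) * (fC C ws ys - bTS) := by
    by_contra hlt
    push_neg at hlt
    have hMpos : 0 < max (fR R xs zs) (fC C ws ys) :=
      lt_of_lt_of_le hbpos (le_trans hr01b (le_max_left _ _))
    have hMne : max (fR R xs zs) (fC C ws ys) ≠ 0 := hMpos.ne'
    have ha' : fR R xs zs / max (fR R xs zs) (fC C ws ys) ∈ Set.Icc (0:ℝ) 1 :=
      ⟨div_nonneg hr01nn hMpos.le, div_le_one_of_le₀ (le_max_left _ _) hMpos.le⟩
    have hc' : fC C ws ys / max (fR R xs zs) (fC C ws ys) ∈ Set.Icc (0:ℝ) 1 :=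
      ⟨div_nonneg hc10nn hMpos.le, div_le_one_of_le₀ (le_max_right _ _) hMpos.le⟩
    have hX : fR R xs zs * fC C ws ys - fR R xs zs * bTS - fC C ws ys * bTS < 0 := by
      linarith [hlt]
    have h1 := hkey (fR R xs zs / max (fR R xs zs) (fC C ws ys)) ha'
      (fC C ws ys / max (fR R xs zs) (fC C ws ys)) hc'
    have e1 : (fC C ws ys / max (fR R xs zs) (fC C ws ys)) * fR R xs zs
        - (fR R xs zs / max (fR R xs zs) (fC C ws ys)
            + fC C ws ys / max (fR R xs zs) (fC C ws ys)) * bTS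
        = (fR R xs zs * fC C ws ys - fR R xs zs * bTS - fC C ws ys * bTS)
            / max (fR R xs zs) (fC C ws ys) := by
      field_simp
      ring
    have e2 : (fR R xs zs / max (fR R xs zs) (fC C ws ys)) * fC C ws ys
        - (fR R xs zs / max (fR R xs zs) (fC C ws ys)
            + fC C ws ys / max (fR R xs zs) (fC C ws ys)) * bTS
        = (fR R xs zs * fC C ws ys - fR R xs zs * bTS - fC C ws ys * bTS)
            / max (fR R xs zs) (fC C ws ys) := by
      field_simp
      ring
    rw [e1, e2, max_self] at h1
    have := div_neg_of_neg_of_pos hX hMpos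
    linarith
  -- the tilde-point relation
  have hREL : (fC C ws zs * (fR R xs zs - bTS) = bTS * (fR R xs zs - fR R ws zs)) ∨
      (fR R ws zs * (fC C ws ys - bTS) = bTS * (fC C ws ys - fC C ws zs)) := by
    by_cases hcase : fR R ws zs ≤ fC C ws zs
    · left
      have hDpos : 0 < fR R xs zs + fC C ws zs - fR R ws zs := by linarith
      have hp0 : 0 ≤ pstar R C xs ws zs := div_nonneg hr01nn hDpos.le
      have hp1 : pstar R C xs ws zs ≤ 1 := div_le_one_of_le₀ (by linarith) hDpos.le
      have hpD : pstar R C xs ws zs * (fR R xs zs + fC C ws zs - fR R ws zs)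
          = fR R xs zs := div_mul_cancel₀ _ hDpos.ne'
      have htuv : tildeUV R C xs ys ws zs
          = (pstar R C xs ws zs • ws + (1 - pstar R C xs ws zs) • xs, zs) := by
        unfold tildeUV; rw [if_pos hcase]
      rw [htuv] at hb2
      have hfRt : fR R (pstar R C xs ws zs • ws + (1 - pstar R C xs ws zs) • xs) zs
          = pstar R C xs ws zs * fR R ws zs + (1 - pstar R C xs ws zs) * fR R xs zs := by
        have h := fR_combo R xs ws ys zs hSR (a := pstar R C xs ws zs) (c := 1)
          zero_le_one le_rfl
        simp only [one_smul, sub_self, zero_smul, add_zero] at h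
        rw [h]; ring
      have hfCt : fC C (pstar R C xs ws zs • ws + (1 - pstar R C xs ws zs) • xs) zs
          = pstar R C xs ws zs * fC C ws zs := by
        have h := fC_combo C xs ws ys zs hSC (a := pstar R C xs ws zs) (c := 1) hp0 hp1
        simp only [one_smul, sub_self, zero_smul, add_zero] at h
        rw [h, hxz0]; ring
      have heqpt : pstar R C xs ws zs * fR R ws zs
          + (1 - pstar R C xs ws zs) * fR R xs zs
          = pstar R C xs ws zs * fC C ws zs := by linear_combination -hpD
      have hptb : pstar R C xs ws zs * fC C ws zs = bTS := by
        rw [← hb2]; unfold fNE; rw [hfRt, hfCt, heqpt, max_self]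
      have hbD : bTS * (fR R xs zs + fC C ws zs - fR R ws zs)
          = fC C ws zs * fR R xs zs := by
        calc bTS * (fR R xs zs + fC C ws zs - fR R ws zs)
            = (pstar R C xs ws zs * fC C ws zs)
                * (fR R xs zs + fC C ws zs - fR R ws zs) := by rw [hptb]
        _ = fC C ws zs * (pstar R C xs ws zs
                * (fR R xs zs + fC C ws zs - fR R ws zs)) := by ring
        _ = fC C ws zs * fR R xs zs := by rw [hpD]
      linear_combination -hbD
    · right
      push_neg at hcase
      have hDpos : 0 < fC C ws ys + fR R ws zs - fC C ws zs := by linarith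
      have hq0 : 0 ≤ qstar R C ws ys zs := div_nonneg hc10nn hDpos.le
      have hq1 : qstar R C ws ys zs ≤ 1 := div_le_one_of_le₀ (by linarith) hDpos.le
      have hqD : qstar R C ws ys zs * (fC C ws ys + fR R ws zs - fC C ws zs)
          = fC C ws ys := div_mul_cancel₀ _ hDpos.ne'
      have htuv : tildeUV R C xs ys ws zs
          = (ws, qstar R C ws ys zs • zs + (1 - qstar R C ws ys zs) • ys) := by
        unfold tildeUV; rw [if_neg (not_le.mpr hcase)]
      rw [htuv] at hb2
      have hfRt : fR R ws (qstar R C ws ys zs • zs + (1 - qstar R C ws ys zs) • ys)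
          = qstar R C ws ys zs * fR R ws zs := by
        have h := fR_combo R xs ws ys zs hSR (a := 1) (c := qstar R C ws ys zs) hq0 hq1
        simp only [one_smul, sub_self, zero_smul, add_zero] at h
        rw [h, hwy0]; ring
      have hfCt : fC C ws (qstar R C ws ys zs • zs + (1 - qstar R C ws ys zs) • ys)
          = qstar R C ws ys zs * fC C ws zs + (1 - qstar R C ws ys zs) * fC C ws ys := by
        have h := fC_combo C xs ws ys zs hSC (a := 1) (c := qstar R C ws ys zs)
          zero_le_one le_rfl
        simp only [one_smul, sub_self, zero_smul, add_zero] at h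
        rw [h]; ring
      have heqpt : qstar R C ws ys zs * fC C ws zs
          + (1 - qstar R C ws ys zs) * fC C ws ys
          = qstar R C ws ys zs * fR R ws zs := by linear_combination -hqD
      have hptb : qstar R C ws ys zs * fR R ws zs = bTS := by
        rw [← hb2]; unfold fNE; rw [hfRt, hfCt, heqpt, max_self]
      have hbD : bTS * (fC C ws ys + fR R ws zs - fC C ws zs)
          = fR R ws zs * fC C ws ys := by
        calc bTS * (fC C ws ys + fR R ws zs - fC C ws zs)
            = (qstar R C ws ys zs * fR R ws zs)
                * (fC C ws ys + fR R ws zs - fC C ws zs) := by rw [hptb]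
        _ = fR R ws zs * (qstar R C ws ys zs
                * (fC C ws ys + fR R ws zs - fC C ws zs)) := by ring
        _ = fR R ws zs * fC C ws ys := by rw [hqD]
      linear_combination -hbD
  -- the final argument
  intro α hα β hβ
  by_contra hcon
  push_neg at hcon
  unfold fNE at hcon
  obtain ⟨h1, h2⟩ := max_lt_iff.mp hcon
  rw [fR_combo R xs ws ys zs hSR hβ.1 hβ.2, hwy0, hr00b] at h1
  rw [fC_combo C xs ws ys zs hSC hα.1 hα.2, hxz0, hc00b] at h2
  rcases hREL with hrel | hrel
  · exact alg bTS (fR R xs zs - bTS) (fC C ws ys - bTS) (fR R ws zs) (fC C ws zs) α β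
      hbpos (by linarith) (by linarith) hr11nn huv (by linear_combination hrel)
      hα.1 hα.2 hβ.1 hβ.2 (by linarith [h1]) (by linarith [h2])
  · exact alg bTS (fC C ws ys - bTS) (fR R xs zs - bTS) (fC C ws zs) (fR R ws zs) β α
      hbpos (by linarith) (by linarith) hc11nn (by linarith [huv]) (by linear_combination hrel)
      hβ.1 hβ.2 hα.1 hα.2 (by linarith [h2]) (by linarith [h1])

end TS
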